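/- Let P : [0,∞) → ℝ be C¹ with P(0) = 0, P'(Z) > 0 for Z ≥ 0, 0 < (5/3)P(Z) − P'(Z)Z ≤ cZ for all Z > 0, and define S(Z) = (3/2)·∫_Z^∞ ((5/3)P(s) − P'(s)s)/s² ds (assumed finite with S(Z) → 0 as Z → ∞). If moreover P is convex, then p_∞ := lim_{Z→∞} P(Z)/Z^{5/3} is strictly positive. -/
import Mathlib

open Real Filter Set MeasureTheory

-- algebra helper: the integrand equals -g'(s) * s^(2/3)
lemma key_alg (P P' : ℝ → ℝ) {s : ℝ} (hs : 0 < s) :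
    ((5/3) * P s - P' s * s) / s ^ 2 =
      -((P' s * s ^ ((5:ℝ)/3) - P s * ((5/3) * s ^ ((5:ℝ)/3 - 1))) / (s ^ ((5:ℝ)/3)) ^ 2)
        * s ^ ((2:ℝ)/3) := by
  have h53 : (5:ℝ)/3 = 1 + 2/3 := by norm_num
  have h1 : s ^ ((5:ℝ)/3) = s * s ^ ((2:ℝ)/3) := by
    rw [h53, Real.rpow_add hs, Real.rpow_one]
  have h2 : (5:ℝ)/3 - 1 = 2/3 := by norm_num
  have hu : (0:ℝ) < s ^ ((2:ℝ)/3) := Real.rpow_pos_of_pos hs _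
  rw [h2, h1]
  field_simp
  ring

theorem stmt1 (P P' S : ℝ → ℝ) (c pinf : ℝ) (hc : 0 < c)
    (hderiv : ∀ Z, 0 ≤ Z → HasDerivAt P (P' Z) Z)
    (hcont : ContinuousOn P' (Set.Ici 0))
    (hP0 : P 0 = 0)
    (hP' : ∀ Z, 0 ≤ Z → 0 < P' Z)
    (hstab : ∀ Z, 0 < Z → 0 < (5/3) * P Z - P' Z * Z ∧
      (5/3) * P Z - P' Z * Z ≤ c * Z)
    (hSdef : ∀ Z, 0 < Z →
      S Z = (3/2) * ∫ s in Set.Ioi Z, ((5/3) * P s - P' s * s) / s ^ 2)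
    (hSint : ∀ Z, 0 < Z →
      IntegrableOn (fun s => ((5/3) * P s - P' s * s) / s ^ 2) (Set.Ioi Z))
    (hS0 : Tendsto S atTop (nhds 0))
    (hconv : ConvexOn ℝ (Set.Ici 0) P)
    (hlim : Tendsto (fun Z => P Z / Z ^ ((5:ℝ)/3)) atTop (nhds pinf)) :
    0 < pinf := by
  by_contra hpos
  push_neg at hpos
  -- continuity of P on Ici 0
  have hPcont : ContinuousOn P (Ici 0) := fun x hx =>
    (hderiv x hx).continuousAt.continuousWithinAt
  -- P 1 > 0
  have hP1 : 0 < P 1 := by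
    have hmono : StrictMonoOn P (Ici 0) := by
      apply strictMonoOn_of_deriv_pos (convex_Ici 0) hPcont
      intro x hx
      rw [interior_Ici] at hx
      rw [(hderiv x hx.le).deriv]
      exact hP' x hx.le
    have := hmono (self_mem_Ici) (by norm_num : (1:ℝ) ∈ Ici 0) one_pos
    linarith
  -- set up g and g'
  set g : ℝ → ℝ := fun s => P s / s ^ ((5:ℝ)/3) with hg
  set g' : ℝ → ℝ := fun s =>
    (P' s * s ^ ((5:ℝ)/3) - P s * ((5/3) * s ^ ((5:ℝ)/3 - 1))) / (s ^ ((5:ℝ)/3)) ^ 2 with hg'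
  have hgderiv : ∀ s : ℝ, 0 < s → HasDerivAt g (g' s) s := by
    intro s hs
    have hpow : HasDerivAt (fun x : ℝ => x ^ ((5:ℝ)/3)) ((5/3) * s ^ ((5:ℝ)/3 - 1)) s :=
      Real.hasDerivAt_rpow_const (Or.inl hs.ne')
    exact (hderiv s hs.le).div hpow (by positivity)
  -- key inequality: for Z > 0, (3/2) * Z^(2/3) * (g Z - pinf) ≤ S Z
  have hkey : ∀ Z : ℝ, 0 < Z → (3/2) * (Z ^ ((2:ℝ)/3) * (g Z - pinf)) ≤ S Z := by
    intro Z hZ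
    have hZu : (0:ℝ) < Z ^ ((2:ℝ)/3) := Real.rpow_pos_of_pos hZ _
    set h : ℝ → ℝ := fun s => ((5/3) * P s - P' s * s) / s ^ 2 with hh
    have hint : IntegrableOn h (Ioi Z) := hSint Z hZ
    -- -g' is continuous on Ioi Z
    have hcont' : ContinuousOn (fun s => -g' s) (Ioi Z) := by
      have hsub : Ioi Z ⊆ Ici (0:ℝ) := fun x hx => le_of_lt (lt_of_le_of_lt hZ.le hx)
      apply ContinuousOn.neg
      have hrp : ∀ p : ℝ, ContinuousOn (fun s : ℝ => s ^ p) (Ioi Z) := fun p x hx =>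
        (Real.continuousAt_rpow_const x p (Or.inl (ne_of_gt (hZ.trans hx)))).continuousWithinAt
      apply ContinuousOn.div
      · exact ((hcont.mono hsub).mul (hrp _)).sub
          ((hPcont.mono hsub).mul (continuousOn_const.mul (hrp _)))
      · exact (hrp _).pow 2
      · intro x hx
        have hx0 : 0 < x := hZ.trans hx
        positivity
    -- -g' s = h s / s^(2/3) for s > Z
    have hrel : ∀ s ∈ Ioi Z, -g' s = h s / s ^ ((2:ℝ)/3) := by
      intro s hs
      have hs0 : 0 < s := hZ.trans hs
      have hu : (0:ℝ) < s ^ ((2:ℝ)/3) := Real.rpow_pos_of_pos hs0 _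
      rw [eq_div_iff hu.ne']
      exact (key_alg P P' hs0).symm
    -- integrability of -g'
    have hintg' : IntegrableOn (fun s => -g' s) (Ioi Z) := by
      apply Integrable.mono' (hint.const_mul ((Z ^ ((2:ℝ)/3))⁻¹))
        (hcont'.aestronglyMeasurable measurableSet_Ioi)
      filter_upwards [ae_restrict_mem measurableSet_Ioi] with s hs
      have hs0 : 0 < s := hZ.trans hs
      have hu : (0:ℝ) < s ^ ((2:ℝ)/3) := Real.rpow_pos_of_pos hs0 _
      have hpos' : 0 < h s := by
        have := (hstab s hs0).1
        rw [hh]; positivity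
      have hZs : Z ^ ((2:ℝ)/3) ≤ s ^ ((2:ℝ)/3) :=
        Real.rpow_le_rpow hZ.le (le_of_lt hs) (by norm_num)
      rw [hrel s hs, Real.norm_eq_abs, abs_of_nonneg (by positivity)]
      rw [div_eq_mul_inv, mul_comm]
      exact mul_le_mul_of_nonneg_right (inv_anti₀ hZu hZs) hpos'.le
    -- FTC
    have hgcontZ : ContinuousWithinAt g (Ici Z) Z :=
      ((hgderiv Z hZ).continuousAt).continuousWithinAt
    have hftc : ∫ s in Ioi Z, g' s = pinf - g Z :=
      integral_Ioi_of_hasDerivAt_of_tendsto hgcontZ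
        (fun x hx => hgderiv x (hZ.trans hx)) (by simpa [Pi.neg_def] using hintg'.neg) hlim
    have hftc' : ∫ s in Ioi Z, -g' s = g Z - pinf := by
      rw [integral_neg, hftc]; ring
    -- monotone integral
    have hmono : Z ^ ((2:ℝ)/3) * (g Z - pinf) ≤ ∫ s in Ioi Z, h s := by
      have : ∫ s in Ioi Z, Z ^ ((2:ℝ)/3) * (-g' s) ≤ ∫ s in Ioi Z, h s := by
        apply setIntegral_mono_on (hintg'.const_mul _) hint measurableSet_Ioi
        intro s hs
        have hs0 : 0 < s := hZ.trans hs
        have hu : (0:ℝ) < s ^ ((2:ℝ)/3) := Real.rpow_pos_of_pos hs0 _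
        have hpos' : 0 < h s := by
          have := (hstab s hs0).1
          rw [hh]; positivity
        have hZs : Z ^ ((2:ℝ)/3) ≤ s ^ ((2:ℝ)/3) :=
          Real.rpow_le_rpow hZ.le (le_of_lt hs) (by norm_num)
        rw [hrel s hs]
        rw [mul_div_assoc', div_le_iff₀ hu]
        nlinarith
      calc Z ^ ((2:ℝ)/3) * (g Z - pinf) = ∫ s in Ioi Z, Z ^ ((2:ℝ)/3) * (-g' s) := by
            rw [integral_const_mul, hftc']
        _ ≤ ∫ s in Ioi Z, h s := this
    rw [hSdef Z hZ]
    linarith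
  -- for Z ≥ 1, (3/2) * P 1 ≤ S Z
  have hfin : ∀ Z : ℝ, 1 ≤ Z → (3/2) * P 1 ≤ S Z := by
    intro Z hZ1
    have hZ : (0:ℝ) < Z := lt_of_lt_of_le one_pos hZ1
    have h1 : Z ^ ((2:ℝ)/3) * g Z = P Z / Z := by
      rw [hg]
      rw [mul_div_assoc']
      rw [mul_comm, mul_div_assoc, ← Real.rpow_sub hZ]
      norm_num
      rw [Real.rpow_neg_one]
      rw [div_eq_mul_inv]
    -- convexity: P 1 ≤ P Z / Z
    have h2 : P 1 ≤ P Z / Z := by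
      have := hconv.2 (self_mem_Ici (α := ℝ)) (le_of_lt hZ : (0:ℝ) ≤ Z)
        (show (0:ℝ) ≤ 1 - 1/Z by
          have : 1/Z ≤ 1 := by rw [div_le_one hZ]; exact hZ1
          linarith)
        (show (0:ℝ) ≤ 1/Z by positivity)
        (by ring)
      simp only [smul_eq_mul, mul_zero, zero_add, hP0, mul_zero, zero_add] at this
      rw [one_div, inv_mul_cancel₀ hZ.ne'] at this
      rw [div_eq_inv_mul]
      exact this
    have h3 := hkey Z hZ
    have hZu : (0:ℝ) < Z ^ ((2:ℝ)/3) := Real.rpow_pos_of_pos hZ _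
    have h4 : Z ^ ((2:ℝ)/3) * (g Z - pinf) ≥ P 1 := by
      have : Z ^ ((2:ℝ)/3) * (g Z - pinf) = P Z / Z - Z ^ ((2:ℝ)/3) * pinf := by
        rw [mul_sub, h1]
      rw [this]
      nlinarith
    linarith
  -- contradiction with S → 0
  have := (hS0.eventually_lt_const (show (0:ℝ) < (3/2) * P 1 by positivity)).and
    (eventually_ge_atTop (1:ℝ))
  obtain ⟨Z, hZlt, hZ1⟩ := this.exists
  linarith [hfin Z hZ1]
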